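/- Assume in addition: ⟨·,·⟩ is nondegenerate (⟨x,c⟩ = 0 for all c implies x = 0); the bracket satisfies the Jacobi identity; the anchor is a homomorphism, ρ([a,b]) = ρ(a)∘ρ(b) − ρ(b)∘ρ(a); and ∇K = 0, i.e. ∇_a(Kb) = K(∇_a b) for all a,b (the para-Kähler situation). Define the curvature R(a,b)c = ∇_a∇_b c − ∇_b∇_a c − ∇_{[a,b]} c. Then: (1) R(a⁺,b⁺)c = 0 for all c whenever Ka⁺ = a⁺ and Kb⁺ = b⁺; (2) R(a⁻,b⁻)c = 0 for all c whenever Ka⁻ = −a⁻ and Kb⁻ = −b⁻; (3) if Ka⁺ = a⁺, Kb⁺ = b⁺, Ka⁻ = −a⁻ and Kb⁻ = −b⁻, then R(a⁺,a⁻)b⁺ = R(b⁺,a⁻)a⁺ and R(a⁻,a⁺)b⁻ = R(b⁻,a⁺)a⁻. (Proposition 'pr11', Section 3.) -/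
import Mathlib


/-!
Statement 10 (Proposition `pr11`, Section 3): in the para-Kähler situation,
the curvature of the Levi-Civita connection vanishes on pairs of sections of
`A⁺` (resp. `A⁻`), and satisfies the symmetry
`R(a⁺,a⁻)b⁺ = R(b⁺,a⁻)a⁺`, `R(a⁻,a⁺)b⁻ = R(b⁻,a⁺)a⁻`.
-/

section

variable {R : Type*} [CommRing R] [Algebra ℝ R]
variable {M : Type*} [AddCommGroup M] [Module R M] [Module ℝ M] [IsScalarTower ℝ R M]

/-- The curvature `R(a,b)c = ∇_a∇_b c − ∇_b∇_a c − ∇_{[a,b]} c`. -/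
def curv (bra : M →ₗ[ℝ] M →ₗ[ℝ] M) (nab : M →ₗ[ℝ] M →ₗ[ℝ] M) (a b c : M) : M :=
  nab a (nab b c) - nab b (nab a c) - nab (bra a b) c

theorem stmt10
    (ρ : M →ₗ[R] Derivation ℝ R R)
    (bra : M →ₗ[ℝ] M →ₗ[ℝ] M)
    (hskew : ∀ a b : M, bra a b = - bra b a)
    (hleib : ∀ (a b : M) (f : R), bra a (f • b) = f • bra a b + ρ a f • b)
    (hjac : ∀ a b c : M,
      bra (bra a b) c + bra (bra b c) a + bra (bra c a) b = 0)
    (hanchor : ∀ (a b : M) (f : R),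
      ρ (bra a b) f = ρ a (ρ b f) - ρ b (ρ a f))
    (g : M →ₗ[R] M →ₗ[R] R)
    (gsymm : ∀ a b : M, g a b = g b a)
    (gnondeg : ∀ x : M, (∀ c : M, g x c = 0) → x = 0)
    (nab : M →ₗ[ℝ] M →ₗ[ℝ] M)
    (hnab1 : ∀ (f : R) (a b : M), nab (f • a) b = f • nab a b)
    (hnab2 : ∀ (a : M) (f : R) (b : M), nab a (f • b) = f • nab a b + ρ a f • b)
    (hmetric : ∀ a b c : M, ρ a (g b c) = g (nab a b) c + g b (nab a c))
    (htf : ∀ a b : M, nab a b - nab b a = bra a b)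
    (K : M →ₗ[R] M)
    (hK2 : ∀ a : M, K (K a) = a)
    (hKskew : ∀ a b : M, g (K a) b + g a (K b) = 0)
    (hparallel : ∀ a b : M, nab a (K b) = K (nab a b)) :
    -- (1)
    (∀ ap bp : M, K ap = ap → K bp = bp → ∀ c : M, curv bra nab ap bp c = 0)
    ∧
    -- (2)
    (∀ am bm : M, K am = -am → K bm = -bm → ∀ c : M, curv bra nab am bm c = 0)
    ∧
    -- (3)
    (∀ ap bp am bm : M, K ap = ap → K bp = bp → K am = -am → K bm = -bm →
      curv bra nab ap am bp = curv bra nab bp am ap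
      ∧ curv bra nab am ap bm = curv bra nab bm ap am) := by
  clear hleib hnab1 hnab2
  -- dividing by two in `R`
  have half2 : ∀ x : R, x + x = 0 → x = 0 := by
    intro x h
    have h2 : (2:ℝ) • x = 0 := by rw [two_smul]; exact h
    calc x = (2:ℝ)⁻¹ • ((2:ℝ) • x) := by rw [smul_smul]; norm_num
    _ = 0 := by rw [h2, smul_zero]
  -- isotropy of the eigenspaces
  have isoP : ∀ x y : M, K x = x → K y = y → g x y = 0 := by
    intro x y hx hy
    have h := hKskew x y
    rw [hx, hy] at h
    exact half2 _ h
  have isoM : ∀ x y : M, K x = -x → K y = -y → g x y = 0 := by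
    intro x y hx hy
    have h := hKskew x y
    rw [hx, hy, map_neg, LinearMap.neg_apply, map_neg] at h
    have h' : g x y + g x y = 0 := by linear_combination -h
    exact half2 _ h'
  -- curvature commutes with K
  have curvK : ∀ a b c : M, curv bra nab a b (K c) = K (curv bra nab a b c) := by
    intro a b c
    simp only [curv, hparallel, map_sub]
  -- curvature skew in the first two arguments
  have curvskew : ∀ a b c : M, curv bra nab a b c = - curv bra nab b a c := by
    intro a b c
    rw [curv, curv, hskew b a, map_neg, LinearMap.neg_apply]
    abel
  -- first Bianchi identity
  have bianchi : ∀ a b c : M,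
      curv bra nab a b c + curv bra nab b c a + curv bra nab c a b = 0 := by
    intro a b c
    have e : ∀ x y : M, bra x y = nab x y - nab y x := fun x y => (htf x y).symm
    have key := hjac a b c
    rw [e (bra a b) c, e (bra b c) a, e (bra c a) b, e a b, e b c, e c a] at key
    simp only [map_sub, LinearMap.sub_apply] at key
    have h0 : -(curv bra nab a b c + curv bra nab b c a + curv bra nab c a b) = 0 := by
      simp only [curv]
      rw [e a b, e b c, e c a]
      simp only [map_sub, LinearMap.sub_apply]
      rw [← key]
      abel
    exact neg_eq_zero.mp h0
  -- metric skew-symmetry of the curvature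
  have curvg : ∀ a b c d : M,
      g (curv bra nab a b c) d = - g c (curv bra nab a b d) := by
    intro a b c d
    have H := hanchor a b (g c d)
    have Hb : ρ a (ρ b (g c d)) = g (nab a (nab b c)) d + g (nab b c) (nab a d)
        + (g (nab a c) (nab b d) + g c (nab a (nab b d))) := by
      rw [hmetric b c d, map_add, hmetric a (nab b c) d, hmetric a c (nab b d)]
    have Ha : ρ b (ρ a (g c d)) = g (nab b (nab a c)) d + g (nab a c) (nab b d)
        + (g (nab b c) (nab a d) + g c (nab b (nab a d))) := by
      rw [hmetric a c d, map_add, hmetric b (nab a c) d, hmetric b c (nab a d)]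
    have Hab : ρ (bra a b) (g c d) = g (nab (bra a b) c) d + g c (nab (bra a b) d) :=
      hmetric (bra a b) c d
    rw [Hb, Ha, Hab] at H
    simp only [curv, map_sub, LinearMap.sub_apply]
    linear_combination -H
  -- abbreviation lemmas on  S x y z w := g (curv x y z) w
  have sk1 : ∀ x y z w : M,
      g (curv bra nab x y z) w = - g (curv bra nab y x z) w := by
    intro x y z w
    rw [curvskew x y z, map_neg, LinearMap.neg_apply]
  have sk2 : ∀ x y z w : M,
      g (curv bra nab x y z) w = - g (curv bra nab x y w) z := by
    intro x y z w
    rw [curvg x y z w, gsymm]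
  have Sb : ∀ x y z w : M,
      g (curv bra nab x y z) w + g (curv bra nab y z x) w
        + g (curv bra nab z x y) w = 0 := by
    intro x y z w
    have h := congrArg (fun m => g m w) (bianchi x y z)
    simpa only [map_add, LinearMap.add_apply, map_zero, LinearMap.zero_apply] using h
  -- pair symmetry  g (R(a,b)c, d) = g (R(c,d)a, b)
  have pairsym : ∀ a b c d : M,
      g (curv bra nab a b c) d = g (curv bra nab c d a) b := by
    intro a b c d
    have stepA : ∀ x y z w : M,
        g (curv bra nab z x y) w + g (curv bra nab y w x) z = 0 := by
      intro x y z w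
      have B1 := Sb x y z w
      have B2 := Sb y z w x
      have B3 := Sb z w x y
      have B4 := Sb w x y z
      have e1 := sk2 x y z w
      have e2 := sk2 y z x w
      have e3 := sk2 z w y x
      have e4 := sk2 w x z y
      have h5 : g (curv bra nab x z w) y = g (curv bra nab z x y) w := by
        rw [sk1 x z w y, sk2 z x w y]; ring
      have h6 : g (curv bra nab w y z) x = g (curv bra nab y w x) z := by
        rw [sk1 w y z x, sk2 y w z x]; ring
      apply half2
      linear_combination B1 + B2 + B3 + B4 - e1 - e2 - e3 - e4 - h5 - h6
    have h := stepA b c a d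
    have h2 := sk2 c d b a
    linear_combination h - h2
  -- eigenvector stability of the curvature
  have KcurvP : ∀ c d x : M, K x = x → K (curv bra nab c d x) = curv bra nab c d x := by
    intro c d x hx
    rw [← curvK, hx]
  have KcurvM : ∀ c d x : M, K x = -x → K (curv bra nab c d x) = -(curv bra nab c d x) := by
    intro c d x hx
    rw [← curvK, hx]
    simp only [curv, map_neg]
    abel
  -- part (1)
  have part1 : ∀ ap bp : M, K ap = ap → K bp = bp → ∀ c : M, curv bra nab ap bp c = 0 := by
    intro ap bp hap hbp c
    apply gnondeg
    intro d
    rw [pairsym ap bp c d]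
    exact isoP _ _ (KcurvP c d ap hap) hbp
  have part2 : ∀ am bm : M, K am = -am → K bm = -bm → ∀ c : M, curv bra nab am bm c = 0 := by
    intro am bm ham hbm c
    apply gnondeg
    intro d
    rw [pairsym am bm c d]
    exact isoM _ _ (KcurvM c d am ham) hbm
  refine ⟨part1, part2, ?_⟩
  intro ap bp am bm hap hbp ham hbm
  constructor
  · have hb := bianchi ap am bp
    rw [part1 bp ap hbp hap am, curvskew am bp ap] at hb
    linear_combination (norm := abel) hb
  · have hb := bianchi am ap bm
    rw [part2 bm am hbm ham ap, curvskew ap bm am] at hb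
    linear_combination (norm := abel) hb

end
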